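/- arXiv:2605.28709 — 2 statements merged into one kernel-verified Lean document; each statement's English description precedes it below -/
import Mathlib

section
/- Let n ≥ 2 and let X = {x₁, −x₁, …, x_N, −x_N} ⊆ S^{n−1} be a finite symmetric set. Then every Borel measurable set A ⊆ S^{n−1} that avoids orthogonality satisfies δ(A) ≤ Γ(G_X). In particular, α_n = sup{δ(A) : A measurable, avoiding orthogonality} satisfies α_n ≤ Γ(G_X). -/
open MeasureTheory Metric Finset
open scoped RealInnerProductSpace ENNReal Classical

noncomputable section
set_option synthInstance.maxHeartbeats 1000000
set_option maxHeartbeats 1000000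

/-- The Borel measurable-space structure on `n × n` real matrices. -/
instance matrixMeasurableSpace (n : ℕ) : MeasurableSpace (Matrix (Fin n) (Fin n) ℝ) := borel _

/-- The orthogonal group `O(n)`, as the group of `n × n` orthogonal real matrices. -/
abbrev OrthGroup (n : ℕ) := Matrix.orthogonalGroup (Fin n) ℝ

/-- The natural action of an orthogonal matrix `T ∈ O(n)` on a vector `x ∈ ℝⁿ`. -/
def act {n : ℕ} (T : OrthGroup n) (x : EuclideanSpace ℝ (Fin n)) : EuclideanSpace ℝ (Fin n) :=
  Matrix.toEuclideanLin (T : Matrix (Fin n) (Fin n) ℝ) x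

/-- The unit sphere `S^{n-1} = {x ∈ ℝⁿ : ‖x‖ = 1}`. -/
def unitSphere (n : ℕ) : Set (EuclideanSpace ℝ (Fin n)) := {x | ‖x‖ = 1}

/-- A set `A ⊆ ℝⁿ` avoids orthogonality if `⟪a, a'⟫ ≠ 0` for all `a, a' ∈ A`. -/
def AvoidsOrthogonality {n : ℕ} (A : Set (EuclideanSpace ℝ (Fin n))) : Prop :=
  ∀ a ∈ A, ∀ a' ∈ A, ⟪a, a'⟫ ≠ 0

/-- The density `δ(A)` of a subset `A` of the unit sphere: its surface measure divided by
the total surface measure of the sphere. -/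
def density (n : ℕ) (A : Set (EuclideanSpace ℝ (Fin n))) : ℝ :=
  ((volume : Measure (EuclideanSpace ℝ (Fin n))).toSphere
      (((↑) : sphere (0 : EuclideanSpace ℝ (Fin n)) 1 → EuclideanSpace ℝ (Fin n)) ⁻¹' A)).toReal /
  ((volume : Measure (EuclideanSpace ℝ (Fin n))).toSphere Set.univ).toReal

/-- The Legendre polynomials, normalized so that `legendre k 1 = 1`:
`P₀ = 1`, `P₁(t) = t`, and `k·P_k(t) = (2k−1)·t·P_{k−1}(t) − (k−1)·P_{k−2}(t)` for `k ≥ 2`. -/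
def legendre : ℕ → ℝ → ℝ
  | 0, _ => 1
  | 1, t => t
  | (k+2), t => ((2*(k:ℝ)+3) * t * legendre (k+1) t - ((k:ℝ)+1) * legendre k t) / ((k:ℝ)+2)

/-- `I` is an independent set of the orthogonality graph `G_X` of the symmetric set
`X = {±x_1, …, ±x_N}`: no two distinct indices of `I` correspond to orthogonal points. -/
def IsIndependent {n N : ℕ} (x : Fin N → EuclideanSpace ℝ (Fin n)) (I : Finset (Fin N)) : Prop :=
  ∀ i ∈ I, ∀ j ∈ I, i ≠ j → ⟪x i, x j⟫ ≠ 0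

/-- The set of points `{±x_i : i ∈ Y}`. -/
def pmSet {n N : ℕ} (x : Fin N → EuclideanSpace ℝ (Fin n)) (Y : Finset (Fin N)) :
    Set (EuclideanSpace ℝ (Fin n)) :=
  {v | ∃ i ∈ Y, v = x i ∨ v = -x i}

/-- `Y` and `Z` are geometrically congruent: some `S ∈ O(n)` maps `{±x_i : i ∈ Y}`
onto `{±x_j : j ∈ Z}`. -/
def GeomCongruent {n N : ℕ} (x : Fin N → EuclideanSpace ℝ (Fin n)) (Y Z : Finset (Fin N)) : Prop :=
  ∃ S : OrthGroup n, act S '' pmSet x Y = pmSet x Z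

/-- The atomic density `a_X(I) = μ{T ∈ O(n) : {i : x_i ∈ T(A)} = I}`. -/
def atomicDensity {n N : ℕ} (μ : Measure (OrthGroup n)) (A : Set (EuclideanSpace ℝ (Fin n)))
    (x : Fin N → EuclideanSpace ℝ (Fin n)) (I : Finset (Fin N)) : ℝ :=
  (μ {T : OrthGroup n | {i : Fin N | x i ∈ act T '' A} = (I : Set (Fin N))}).toReal

/-- `Γ(G_X)`: the supremum of `Σ_{I ∋ 1} a(I)` over all probability distributions `a` on the
independent sets of `G_X` satisfying the geometric congruence constraints. -/
def Gamma (n N : ℕ) (hN : 0 < N) (x : Fin N → EuclideanSpace ℝ (Fin n)) : ℝ :=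
  sSup {g : ℝ | ∃ a : Finset (Fin N) → ℝ,
    (∀ I, 0 ≤ a I) ∧
    (∀ I, ¬ IsIndependent x I → a I = 0) ∧
    (∑ I ∈ Finset.univ.filter (fun I => IsIndependent x I), a I) = 1 ∧
    (∀ Y Z : Finset (Fin N), GeomCongruent x Y Z →
      (∑ I ∈ Finset.univ.filter (fun I => IsIndependent x I ∧ Y ⊆ I), a I) =
      (∑ I ∈ Finset.univ.filter (fun I => IsIndependent x I ∧ Z ⊆ I), a I)) ∧
    g = ∑ I ∈ Finset.univ.filter (fun I => IsIndependent x I ∧ (⟨0, hN⟩ : Fin N) ∈ I), a I}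

namespace DLG
open scoped Matrix Pointwise

variable {n : ℕ}

local notation "E" n => EuclideanSpace ℝ (Fin n)

instance : BorelSpace (Matrix (Fin n) (Fin n) ℝ) := ⟨rfl⟩

lemma transpose_mul_self (T : OrthGroup n) :
    Matrix.transpose (T : Matrix (Fin n) (Fin n) ℝ) * (T : Matrix (Fin n) (Fin n) ℝ) = 1 := by
  have h := Matrix.mem_unitaryGroup_iff'.mp T.2
  rwa [Matrix.star_eq_conjTranspose, Matrix.conjTranspose_eq_transpose_of_trivial] at h

lemma act_apply (T : OrthGroup n) (v : EuclideanSpace ℝ (Fin n)) :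
    act T v = (WithLp.equiv 2 (Fin n → ℝ)).symm
      ((T : Matrix (Fin n) (Fin n) ℝ) *ᵥ (WithLp.equiv 2 (Fin n → ℝ)) v) :=
  Matrix.toEuclideanLin_apply _ _

lemma inner_act (T : OrthGroup n) (u v : EuclideanSpace ℝ (Fin n)) :
    ⟪act T u, act T v⟫ = ⟪u, v⟫ := by
  simp only [act_apply, PiLp.inner_apply, RCLike.inner_apply, starRingEnd_apply, star_trivial]
  have : ∀ w : EuclideanSpace ℝ (Fin n), ∀ i, ((WithLp.equiv 2 (Fin n → ℝ)).symm
      ((T : Matrix (Fin n) (Fin n) ℝ) *ᵥ (WithLp.equiv 2 (Fin n → ℝ)) w)) i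
      = ((T : Matrix (Fin n) (Fin n) ℝ) *ᵥ (WithLp.equiv 2 (Fin n → ℝ)) w) i := fun _ _ => rfl
  simp only [this]
  have key : ((T : Matrix (Fin n) (Fin n) ℝ) *ᵥ (WithLp.equiv 2 (Fin n → ℝ)) u) ⬝ᵥ
      ((T : Matrix (Fin n) (Fin n) ℝ) *ᵥ (WithLp.equiv 2 (Fin n → ℝ)) v)
      = ((WithLp.equiv 2 (Fin n → ℝ)) u) ⬝ᵥ ((WithLp.equiv 2 (Fin n → ℝ)) v) := by
    rw [Matrix.dotProduct_mulVec, ← Matrix.vecMul_transpose, Matrix.vecMul_vecMul,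
      transpose_mul_self, Matrix.vecMul_one]
  rw [dotProduct_comm, dotProduct_comm ((WithLp.equiv 2 (Fin n → ℝ)) u)] at key
  exact key

lemma act_mul (S T : OrthGroup n) (v : EuclideanSpace ℝ (Fin n)) :
    act (S * T) v = act S (act T v) := by
  simp only [act_apply]
  simp [Matrix.mulVec_mulVec]

lemma act_one (v : EuclideanSpace ℝ (Fin n)) : act (1 : OrthGroup n) v = v := by
  simp [act_apply]

lemma act_inv_act (T : OrthGroup n) (v : EuclideanSpace ℝ (Fin n)) :
    act T⁻¹ (act T v) = v := by
  rw [← act_mul, inv_mul_cancel, act_one]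

lemma act_act_inv (T : OrthGroup n) (v : EuclideanSpace ℝ (Fin n)) :
    act T (act T⁻¹ v) = v := by
  rw [← act_mul, mul_inv_cancel, act_one]

lemma act_neg (T : OrthGroup n) (v : EuclideanSpace ℝ (Fin n)) :
    act T (-v) = -(act T v) := by
  simp [act]

lemma norm_act (T : OrthGroup n) (v : EuclideanSpace ℝ (Fin n)) : ‖act T v‖ = ‖v‖ := by
  have h1 : ⟪act T v, act T v⟫ = ⟪v, v⟫ := inner_act T v v
  rw [real_inner_self_eq_norm_sq, real_inner_self_eq_norm_sq] at h1
  have h2 := congrArg Real.sqrt h1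
  rwa [Real.sqrt_sq (norm_nonneg _), Real.sqrt_sq (norm_nonneg _)] at h2



section Topology

lemma continuous_val_mul :
    Continuous fun p : OrthGroup n × OrthGroup n =>
      (p.1 : Matrix (Fin n) (Fin n) ℝ) * (p.2 : Matrix (Fin n) (Fin n) ℝ) :=
  Continuous.matrix_mul (continuous_subtype_val.comp continuous_fst)
    (continuous_subtype_val.comp continuous_snd)

instance : IsTopologicalGroup (OrthGroup n) where
  continuous_mul := by
    apply Continuous.subtype_mk (continuous_val_mul)
  continuous_inv := by
    have : Continuous fun T : OrthGroup n => star (T : Matrix (Fin n) (Fin n) ℝ) :=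
      continuous_subtype_val.star
    exact Continuous.subtype_mk this _

lemma isCompact_orthGroup :
    IsCompact {A : Matrix (Fin n) (Fin n) ℝ | A ∈ Matrix.unitaryGroup (Fin n) ℝ} := by
  have hsub : {A : Matrix (Fin n) (Fin n) ℝ | A ∈ Matrix.unitaryGroup (Fin n) ℝ} ⊆
      Set.pi Set.univ fun _ : Fin n => Set.pi Set.univ fun _ : Fin n => Set.Icc (-1 : ℝ) 1 := by
    intro A hA
    have h := Matrix.mem_unitaryGroup_iff'.mp hA
    have h' : Matrix.transpose A * A = 1 := by
      rwa [Matrix.star_eq_conjTranspose, Matrix.conjTranspose_eq_transpose_of_trivial] at h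
    intro i _ j _
    have hdiag : (∑ k, A k j * A k j) = 1 := by
      have := congrFun (congrFun h' j) j
      simpa [Matrix.mul_apply, Matrix.transpose_apply, Matrix.one_apply] using this
    have hle : (A i j) ^ 2 ≤ 1 := by
      have hnn : ∀ k ∈ Finset.univ, 0 ≤ A k j * A k j := fun k _ => mul_self_nonneg _
      have := Finset.single_le_sum hnn (Finset.mem_univ i)
      rw [hdiag] at this
      nlinarith
    constructor <;> nlinarith
  have hclosed : IsClosed {A : Matrix (Fin n) (Fin n) ℝ | A ∈ Matrix.unitaryGroup (Fin n) ℝ} := by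
    have : {A : Matrix (Fin n) (Fin n) ℝ | A ∈ Matrix.unitaryGroup (Fin n) ℝ} =
        (fun A : Matrix (Fin n) (Fin n) ℝ => star A * A) ⁻¹' {1} := by
      ext A
      simp [Matrix.mem_unitaryGroup_iff']
    rw [this]
    exact IsClosed.preimage ((continuous_id.star).matrix_mul continuous_id) isClosed_singleton
  exact IsCompact.of_isClosed_subset
    ((isCompact_univ_pi fun _ => isCompact_univ_pi fun _ => isCompact_Icc)) hclosed hsub

instance : CompactSpace (OrthGroup n) := isCompact_iff_compactSpace.mp isCompact_orthGroup

instance : Nonempty (OrthGroup n) := ⟨1⟩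

instance : BorelSpace (OrthGroup n) :=
  Subtype.borelSpace {A : Matrix (Fin n) (Fin n) ℝ | A ∈ Matrix.unitaryGroup (Fin n) ℝ}

/-- The Haar probability measure on `O(n)`. -/
noncomputable def haarO (n : ℕ) : Measure (OrthGroup n) :=
  MeasureTheory.Measure.haarMeasure (⊤ : TopologicalSpace.PositiveCompacts (OrthGroup n))

instance : IsProbabilityMeasure (haarO n) := by
  constructor
  have : (Set.univ : Set (OrthGroup n)) =
      ((⊤ : TopologicalSpace.PositiveCompacts (OrthGroup n)) : Set (OrthGroup n)) :=
    (TopologicalSpace.PositiveCompacts.coe_top).symm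
  rw [this, haarO]
  exact MeasureTheory.Measure.haarMeasure_self

instance : (haarO n).IsMulLeftInvariant := by
  unfold haarO; infer_instance

end Topology


section Iso

variable {n : ℕ}

/-- `act T` as a linear isometry equivalence. -/
noncomputable def actIso (T : OrthGroup n) :
    EuclideanSpace ℝ (Fin n) ≃ₗᵢ[ℝ] EuclideanSpace ℝ (Fin n) where
  toLinearEquiv :=
    { Matrix.toEuclideanLin (T : Matrix (Fin n) (Fin n) ℝ) with
      invFun := act T⁻¹
      left_inv := act_inv_act T
      right_inv := act_act_inv T }
  norm_map' := norm_act T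

lemma actIso_apply (T : OrthGroup n) (v : EuclideanSpace ℝ (Fin n)) : actIso T v = act T v := rfl

/-- Every linear isometry of `ℝⁿ` is given by an orthogonal matrix. -/
lemma exists_orth_matrix (f : EuclideanSpace ℝ (Fin n) ≃ₗᵢ[ℝ] EuclideanSpace ℝ (Fin n)) :
    ∃ R : OrthGroup n, ∀ v, act R v = f v := by
  set b := PiLp.basisFun 2 ℝ (Fin n) with hb
  set M := LinearMap.toMatrix b b f.toLinearEquiv.toLinearMap with hM
  have hact : ∀ v, Matrix.toEuclideanLin M v = f v := by
    intro v
    rw [Matrix.toEuclideanLin_eq_toLin, hM, Matrix.toLin_toMatrix]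
    rfl
  have hmem : M ∈ Matrix.orthogonalGroup (Fin n) ℝ := by
    rw [Matrix.mem_orthogonalGroup_iff']
    ext j k
    have hMij : ∀ i j, M i j = f (b j) i := by
      intro i j
      rw [hM, LinearMap.toMatrix_apply]
      rfl
    have : (Mᵀ * M) j k = ∑ i, M i j * M i k := by
      simp [Matrix.mul_apply, Matrix.star_apply, mul_comm]
    rw [this]
    have hinner : ∑ i, M i j * M i k = ⟪f (b j), f (b k)⟫ := by
      rw [PiLp.inner_apply]
      simp [hMij, RCLike.inner_apply, starRingEnd_apply]
      exact Finset.sum_congr rfl fun _ _ => mul_comm _ _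
    rw [hinner, LinearIsometryEquiv.inner_map_map]
    have : ⟪b j, b k⟫ = if j = k then (1:ℝ) else 0 := by
      rw [PiLp.inner_apply]
      simp [hb, PiLp.basisFun_apply, RCLike.inner_apply, starRingEnd_apply,
        Pi.single_apply]
    rw [this, Matrix.one_apply]
  exact ⟨⟨M, hmem⟩, fun v => hact v⟩

/-- Transitivity of `O(n)` on the unit sphere. -/
lemma exists_act_eq (u y : EuclideanSpace ℝ (Fin n)) (hu : ‖u‖ = 1) (hy : ‖y‖ = 1) :
    ∃ R : OrthGroup n, act R u = y := by
  have h : ‖u‖ = ‖y‖ := by rw [hu, hy]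
  obtain ⟨R, hR⟩ := exists_orth_matrix (Submodule.reflection (ℝ ∙ (u - y))ᗮ)
  exact ⟨R, by rw [hR u, Submodule.reflection_sub h]⟩

end Iso


section Sphere

variable {n : ℕ}

/-- The map on the unit sphere induced by a linear isometry. -/
def sphereMap (f : EuclideanSpace ℝ (Fin n) ≃ₗᵢ[ℝ] EuclideanSpace ℝ (Fin n))
    (y : sphere (0 : EuclideanSpace ℝ (Fin n)) 1) : sphere (0 : EuclideanSpace ℝ (Fin n)) 1 :=
  ⟨f y, by
    rw [mem_sphere_zero_iff_norm, f.norm_map]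
    exact mem_sphere_zero_iff_norm.mp y.2⟩

lemma continuous_sphereMap (f : EuclideanSpace ℝ (Fin n) ≃ₗᵢ[ℝ] EuclideanSpace ℝ (Fin n)) :
    Continuous (sphereMap f) :=
  Continuous.subtype_mk (f.continuous.comp continuous_subtype_val) _

lemma toSphere_preimage (f : EuclideanSpace ℝ (Fin n) ≃ₗᵢ[ℝ] EuclideanSpace ℝ (Fin n))
    (s : Set (sphere (0 : EuclideanSpace ℝ (Fin n)) 1)) (hs : MeasurableSet s) :
    (volume : Measure (EuclideanSpace ℝ (Fin n))).toSphere (sphereMap f ⁻¹' s) =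
    (volume : Measure (EuclideanSpace ℝ (Fin n))).toSphere s := by
  have hpre : MeasurableSet (sphereMap f ⁻¹' s) := (continuous_sphereMap f).measurable hs
  rw [Measure.toSphere_apply' (volume : Measure (EuclideanSpace ℝ (Fin n))) hpre,
    Measure.toSphere_apply' (volume : Measure (EuclideanSpace ℝ (Fin n))) hs]
  congr 1
  have himg : (((↑) : sphere (0 : EuclideanSpace ℝ (Fin n)) 1 → _) '' (sphereMap f ⁻¹' s)) =
      f ⁻¹' (((↑) : sphere (0 : EuclideanSpace ℝ (Fin n)) 1 → _) '' s) := by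
    ext v
    constructor
    · rintro ⟨y, hy, rfl⟩
      exact ⟨sphereMap f y, hy, rfl⟩
    · rintro ⟨z, hz, hfz⟩
      have hv : v ∈ sphere (0 : EuclideanSpace ℝ (Fin n)) 1 := by
        rw [mem_sphere_zero_iff_norm, ← f.norm_map v, ← hfz]
        exact mem_sphere_zero_iff_norm.mp z.2
      refine ⟨⟨v, hv⟩, ?_, rfl⟩
      show sphereMap f ⟨v, hv⟩ ∈ s
      have : sphereMap f ⟨v, hv⟩ = z := Subtype.ext hfz.symm
      rw [this]; exact hz
  rw [himg]
  have hsmul : Set.Ioo (0:ℝ) 1 • (f ⁻¹'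
        (((↑) : sphere (0 : EuclideanSpace ℝ (Fin n)) 1 → _) '' s)) =
      f ⁻¹' (Set.Ioo (0:ℝ) 1 •
        (((↑) : sphere (0 : EuclideanSpace ℝ (Fin n)) 1 → _) '' s)) := by
    ext v
    simp only [Set.mem_smul, Set.mem_preimage]
    constructor
    · rintro ⟨r, hr, w, hw, rfl⟩
      exact ⟨r, hr, f w, hw, (f.map_smul r w).symm⟩
    · rintro ⟨r, hr, b, hb, hfv⟩
      refine ⟨r, hr, f.symm b, by simpa using hb, ?_⟩
      have h1 : f.symm (r • b) = v := by rw [hfv, f.symm_apply_apply]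
      have h2 : f.symm (r • b) = r • f.symm b := f.symm.map_smul r b
      rw [h2] at h1
      exact h1
  rw [hsmul]
  have : (f : EuclideanSpace ℝ (Fin n) → EuclideanSpace ℝ (Fin n)) ⁻¹' _ =
      f.toMeasurableEquiv ⁻¹' (Set.Ioo (0:ℝ) 1 •
        (((↑) : sphere (0 : EuclideanSpace ℝ (Fin n)) 1 → _) '' s)) := rfl
  rw [this, ← MeasurableEquiv.map_apply]
  congr 1
  have hmp := f.measurePreserving
  have : (f.toMeasurableEquiv : EuclideanSpace ℝ (Fin n) → EuclideanSpace ℝ (Fin n)) = f :=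
    LinearIsometryEquiv.coe_toMeasurableEquiv f
  rw [this]
  exact hmp.map_eq

end Sphere


section Key

variable {n : ℕ}

lemma act_mem_sphere (T : OrthGroup n) {v : EuclideanSpace ℝ (Fin n)} (hv : ‖v‖ = 1) :
    act T v ∈ sphere (0 : EuclideanSpace ℝ (Fin n)) 1 :=
  mem_sphere_zero_iff_norm.mpr (by rw [norm_act, hv])

lemma continuous_act_vec (v : EuclideanSpace ℝ (Fin n)) :
    Continuous fun T : OrthGroup n => act T v := by
  have h : Continuous fun T : OrthGroup n =>
      (WithLp.equiv 2 (Fin n → ℝ)).symm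
        ((T : Matrix (Fin n) (Fin n) ℝ) *ᵥ (WithLp.equiv 2 (Fin n → ℝ)) v) :=
    (PiLp.continuous_toLp 2 (fun _ : Fin n => ℝ)).comp
      (continuous_subtype_val.matrix_mulVec continuous_const)
  have he : (fun T : OrthGroup n => act T v) = fun T : OrthGroup n =>
      (WithLp.equiv 2 (Fin n → ℝ)).symm
        ((T : Matrix (Fin n) (Fin n) ℝ) *ᵥ (WithLp.equiv 2 (Fin n → ℝ)) v) :=
    funext fun T => act_apply T v
  rw [he]; exact h

lemma continuous_act2 :
    Continuous fun p : OrthGroup n × sphere (0 : EuclideanSpace ℝ (Fin n)) 1 =>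
      act p.1⁻¹ (p.2 : EuclideanSpace ℝ (Fin n)) := by
  have h : Continuous fun p : OrthGroup n × sphere (0 : EuclideanSpace ℝ (Fin n)) 1 =>
      (WithLp.equiv 2 (Fin n → ℝ)).symm
        (((p.1⁻¹ : OrthGroup n) : Matrix (Fin n) (Fin n) ℝ) *ᵥ
          (WithLp.equiv 2 (Fin n → ℝ)) (p.2 : EuclideanSpace ℝ (Fin n))) := by
    refine (PiLp.continuous_toLp 2 (fun _ : Fin n => ℝ)).comp ?_
    refine Continuous.matrix_mulVec ?_ ?_
    · exact continuous_subtype_val.comp (continuous_inv.comp continuous_fst)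
    · exact (PiLp.continuous_ofLp 2 (fun _ : Fin n => ℝ)).comp
        (continuous_subtype_val.comp continuous_snd)
  have he : (fun p : OrthGroup n × sphere (0 : EuclideanSpace ℝ (Fin n)) 1 =>
      act p.1⁻¹ (p.2 : EuclideanSpace ℝ (Fin n))) = fun p =>
      (WithLp.equiv 2 (Fin n → ℝ)).symm
        (((p.1⁻¹ : OrthGroup n) : Matrix (Fin n) (Fin n) ℝ) *ᵥ
          (WithLp.equiv 2 (Fin n → ℝ)) (p.2 : EuclideanSpace ℝ (Fin n))) :=
    funext fun p => act_apply _ _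
  rw [he]; exact h

/-- The joint action map `(T, y) ↦ T⁻¹ y` on the sphere. -/
def Qmap (p : OrthGroup n × sphere (0 : EuclideanSpace ℝ (Fin n)) 1) :
    sphere (0 : EuclideanSpace ℝ (Fin n)) 1 :=
  ⟨act p.1⁻¹ (p.2 : EuclideanSpace ℝ (Fin n)),
    act_mem_sphere _ (mem_sphere_zero_iff_norm.mp p.2.2)⟩

lemma measurable_Qmap : Measurable (Qmap (n := n)) :=
  (Continuous.subtype_mk continuous_act2 _).measurable

lemma toSphere_univ_pos (hn1 : 1 ≤ n) :
    (volume : Measure (EuclideanSpace ℝ (Fin n))).toSphere Set.univ ≠ 0 := by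
  rw [Measure.toSphere_apply_univ]
  refine mul_ne_zero ?_ ?_
  · simp only [ne_eq, Nat.cast_eq_zero]
    have : Module.finrank ℝ (EuclideanSpace ℝ (Fin n)) = n := finrank_euclideanSpace_fin
    rw [this]
    omega
  · exact (measure_ball_pos volume (0 : EuclideanSpace ℝ (Fin n)) one_pos).ne'

lemma toSphere_univ_ne_top :
    (volume : Measure (EuclideanSpace ℝ (Fin n))).toSphere Set.univ ≠ ∞ :=
  measure_ne_top _ _

/-- The key identity: the Haar-measure of `{T : T⁻¹ u ∈ s}` is the normalized sphere measure. -/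
lemma haar_act_eq (hn1 : 1 ≤ n) (u : EuclideanSpace ℝ (Fin n)) (hu : ‖u‖ = 1)
    (s : Set (sphere (0 : EuclideanSpace ℝ (Fin n)) 1)) (hs : MeasurableSet s) :
    haarO n {T : OrthGroup n | Qmap (T, (⟨u, mem_sphere_zero_iff_norm.mpr hu⟩ :
        sphere (0 : EuclideanSpace ℝ (Fin n)) 1)) ∈ s} =
    (volume : Measure (EuclideanSpace ℝ (Fin n))).toSphere s /
      (volume : Measure (EuclideanSpace ℝ (Fin n))).toSphere Set.univ := by
  haveI hsf1 : SFinite (haarO n) := inferInstance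
  haveI hsf2 : SFinite ((volume : Measure (EuclideanSpace ℝ (Fin n))).toSphere) := inferInstance
  set μ := haarO n
  set ν := (volume : Measure (EuclideanSpace ℝ (Fin n))).toSphere
  set u' : sphere (0 : EuclideanSpace ℝ (Fin n)) 1 := ⟨u, mem_sphere_zero_iff_norm.mpr hu⟩
  set c := μ {T : OrthGroup n | Qmap (T, u') ∈ s} with hc
  -- for every y on the sphere, the fiber measure is the same
  have fiber_eq : ∀ y : sphere (0 : EuclideanSpace ℝ (Fin n)) 1,
      μ {T : OrthGroup n | Qmap (T, y) ∈ s} = c := by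
    intro y
    obtain ⟨R, hR⟩ := exists_act_eq u (y : EuclideanSpace ℝ (Fin n)) hu
      (mem_sphere_zero_iff_norm.mp y.2)
    have hset : {T : OrthGroup n | Qmap (T, y) ∈ s} =
        (fun T : OrthGroup n => R⁻¹ * T) ⁻¹' {T : OrthGroup n | Qmap (T, u') ∈ s} := by
      ext T
      simp only [Set.mem_setOf_eq, Set.mem_preimage]
      have : Qmap (T, y) = Qmap (R⁻¹ * T, u') := by
        apply Subtype.ext
        show act T⁻¹ (y : EuclideanSpace ℝ (Fin n)) = act (R⁻¹ * T)⁻¹ u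
        rw [← hR, mul_inv_rev, inv_inv, act_mul]
      rw [this]
    rw [hset, measure_preimage_mul]
  have hP : MeasurableSet (Qmap (n := n) ⁻¹' s) := measurable_Qmap hs
  have h1 : (μ.prod ν) (Qmap (n := n) ⁻¹' s) = ν s := by
    rw [Measure.prod_apply hP]
    have : ∀ T : OrthGroup n, ν (Prod.mk T ⁻¹' (Qmap (n := n) ⁻¹' s)) = ν s := by
      intro T
      have hpre : Prod.mk T ⁻¹' (Qmap (n := n) ⁻¹' s) = sphereMap (actIso T⁻¹) ⁻¹' s := by
        ext y
        simp only [Set.mem_preimage]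
        have : Qmap (T, y) = sphereMap (actIso T⁻¹) y := Subtype.ext rfl
        rw [this]
      rw [hpre]
      exact toSphere_preimage (actIso T⁻¹) s hs
    simp only [this]
    rw [MeasureTheory.lintegral_const]
    simp [μ]
  have h2 : (μ.prod ν) (Qmap (n := n) ⁻¹' s) = c * ν Set.univ := by
    rw [Measure.prod_apply_symm hP]
    have : ∀ y : sphere (0 : EuclideanSpace ℝ (Fin n)) 1,
        μ ((fun T : OrthGroup n => (T, y)) ⁻¹' (Qmap (n := n) ⁻¹' s)) = c := by
      intro y
      have : ((fun T : OrthGroup n => (T, y)) ⁻¹' (Qmap (n := n) ⁻¹' s)) =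
          {T : OrthGroup n | Qmap (T, y) ∈ s} := rfl
      rw [this, fiber_eq]
    simp only [this]
    rw [MeasureTheory.lintegral_const, mul_comm]
  rw [h1] at h2
  rw [ENNReal.eq_div_iff (toSphere_univ_pos hn1) toSphere_univ_ne_top, mul_comm]
  exact h2.symm

end Key


section Main

lemma density_le_aux (n : ℕ) (hn : 2 ≤ n)
    (N : ℕ) (hN : 0 < N) (x : Fin N → EuclideanSpace ℝ (Fin n))
    (hx_sphere : ∀ i, x i ∈ unitSphere n)
    (A : Set (EuclideanSpace ℝ (Fin n))) (hsub : A ⊆ unitSphere n) (hmeas : MeasurableSet A)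
    (havoid : AvoidsOrthogonality A) : density n A ≤ Gamma n N hN x := by
  classical
  have hn1 : 1 ≤ n := le_trans (by norm_num) hn
  set μ := haarO n with hμ
  haveI : IsProbabilityMeasure μ := inferInstanceAs (IsProbabilityMeasure (haarO n))
  -- symmetrize A
  set A' := A ∪ ((fun v : EuclideanSpace ℝ (Fin n) => -v) ⁻¹' A) with hA'
  have hA'meas : MeasurableSet A' :=
    hmeas.union (measurable_neg hmeas)
  have hAsubA' : A ⊆ A' := Set.subset_union_left
  have hA'symm : ∀ v, v ∈ A' → -v ∈ A' := by
    intro v hv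
    rcases hv with hv | hv
    · exact Or.inr (by simpa using hv)
    · exact Or.inl (by simpa using hv)
  have hA'avoid : AvoidsOrthogonality A' := by
    rintro a (ha | ha) b (hb | hb)
    · exact havoid a ha b hb
    · intro h
      exact havoid a ha (-b) hb (by rw [inner_neg_right]; simpa using h)
    · intro h
      exact havoid (-a) ha b hb (by rw [inner_neg_left]; simpa using h)
    · intro h
      exact havoid (-a) ha (-b) hb (by rw [inner_neg_neg]; simpa using h)
  -- the cells of the partition of O(n)
  set C : Fin N → Set (OrthGroup n) := fun i => (fun T => act T⁻¹ (x i)) ⁻¹' A' with hC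
  have hCmeas : ∀ i, MeasurableSet (C i) := by
    intro i
    exact (((continuous_act_vec (x i)).comp continuous_inv).measurable) hA'meas
  set Esets : Finset (Fin N) → Set (OrthGroup n) :=
    fun I => {T | ∀ i : Fin N, T ∈ C i ↔ i ∈ I} with hEsets
  have hEmeas : ∀ I, MeasurableSet (Esets I) := by
    intro I
    have : Esets I = ⋂ i : Fin N, (if i ∈ I then C i else (C i)ᶜ) := by
      ext T
      simp only [hEsets, Set.mem_setOf_eq, Set.mem_iInter]
      constructor
      · intro h i
        by_cases hi : i ∈ I
        · simp only [hi, if_true]; exact (h i).mpr hi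
        · simp only [hi, if_false]; exact fun hc => hi ((h i).mp hc)
      · intro h i
        have := h i
        by_cases hi : i ∈ I
        · simp only [hi, if_true] at this; exact ⟨fun _ => hi, fun _ => this⟩
        · simp only [hi, if_false] at this
          exact ⟨fun hc => absurd hc this, fun hc => absurd hc hi⟩
    rw [this]
    exact MeasurableSet.iInter fun i => by
      by_cases hi : i ∈ I
      · simpa [hi] using hCmeas i
      · simpa [hi] using (hCmeas i).compl
  have hEdisj : ∀ I J : Finset (Fin N), I ≠ J → Disjoint (Esets I) (Esets J) := by
    intro I J hIJ
    rw [Set.disjoint_left]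
    intro T hTI hTJ
    apply hIJ
    ext i
    rw [← hTI i, hTJ i]
  -- the distribution
  set a : Finset (Fin N) → ℝ := fun I => (μ (Esets I)).toReal with ha
  have h0 : ∀ I, 0 ≤ a I := fun I => ENNReal.toReal_nonneg
  have hzero : ∀ I, ¬ IsIndependent x I → a I = 0 := by
    intro I hI
    have : Esets I = ∅ := by
      rw [Set.eq_empty_iff_forall_notMem]
      intro T hT
      apply hI
      intro i hi j hj hij
      have hxi : act T⁻¹ (x i) ∈ A' := (hT i).mpr hi
      have hxj : act T⁻¹ (x j) ∈ A' := (hT j).mpr hj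
      intro hinner
      exact hA'avoid _ hxi _ hxj (by rw [inner_act]; exact hinner)
    simp [ha, this]
  -- B Y and its measure
  set B : Finset (Fin N) → Set (OrthGroup n) := fun Y => {T | ∀ i ∈ Y, T ∈ C i} with hB
  have hBunion : ∀ Y, B Y = ⋃ I ∈ Finset.univ.filter (fun I => Y ⊆ I), Esets I := by
    intro Y
    ext T
    simp only [Set.mem_iUnion, Finset.mem_filter, Finset.mem_univ, true_and]
    constructor
    · intro hT
      refine ⟨Finset.univ.filter (fun i => T ∈ C i), fun i hi => ?_, fun i => ?_⟩
      · exact Finset.mem_filter.mpr ⟨Finset.mem_univ i, hT i hi⟩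
      · simp [Finset.mem_filter]
    · rintro ⟨I, hYI, hTI⟩ i hi
      exact (hTI i).mpr (hYI hi)
  have sumBY : ∀ Y : Finset (Fin N),
      (∑ I ∈ Finset.univ.filter (fun I => IsIndependent x I ∧ Y ⊆ I), a I) = (μ (B Y)).toReal := by
    intro Y
    have hmb : μ (B Y) = ∑ I ∈ Finset.univ.filter (fun I => Y ⊆ I), μ (Esets I) := by
      rw [hBunion Y]
      exact measure_biUnion_finset
        (fun I hI J hJ hIJ => hEdisj I J hIJ) (fun I _ => hEmeas I)
    rw [hmb, ENNReal.toReal_sum (fun I _ => measure_ne_top μ _)]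
    refine Finset.sum_subset ?_ ?_
    · intro I hI
      simp only [Finset.mem_filter, Finset.mem_univ, true_and] at hI ⊢
      exact hI.2
    · intro I hI hI'
      simp only [Finset.mem_filter, Finset.mem_univ, true_and] at hI hI'
      have : ¬ IsIndependent x I := fun h => hI' ⟨h, hI⟩
      exact hzero I this
  -- total mass 1
  have htotal : (∑ I ∈ Finset.univ.filter (fun I => IsIndependent x I), a I) = 1 := by
    have h1 : (∑ I ∈ Finset.univ.filter (fun I => IsIndependent x I ∧ (∅ : Finset (Fin N)) ⊆ I),
        a I) = (μ (B ∅)).toReal := sumBY ∅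
    have h2 : B ∅ = Set.univ := by
      ext T; simp [hB]
    have h3 : Finset.univ.filter (fun I => IsIndependent x I ∧ (∅ : Finset (Fin N)) ⊆ I) =
        Finset.univ.filter (fun I => IsIndependent x I) := by
      apply Finset.filter_congr
      intro I _
      simp [Finset.empty_subset]
    rw [h3] at h1
    rw [h1, h2]
    simp
  -- congruence constraint
  have hcong : ∀ Y Z : Finset (Fin N), GeomCongruent x Y Z →
      (∑ I ∈ Finset.univ.filter (fun I => IsIndependent x I ∧ Y ⊆ I), a I) =
      (∑ I ∈ Finset.univ.filter (fun I => IsIndependent x I ∧ Z ⊆ I), a I) := by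
    intro Y Z hYZ
    obtain ⟨S, hS⟩ := hYZ
    rw [sumBY, sumBY]
    -- B in terms of pmSet
    have hBpm : ∀ W : Finset (Fin N), B W = {T | ∀ v ∈ pmSet x W, act T⁻¹ v ∈ A'} := by
      intro W
      ext T
      simp only [hB, Set.mem_setOf_eq]
      constructor
      · rintro hT v ⟨i, hi, (rfl | rfl)⟩
        · exact hT i hi
        · rw [act_neg]
          exact hA'symm _ (hT i hi)
      · intro hT i hi
        exact hT (x i) ⟨i, hi, Or.inl rfl⟩
    have hpm_inv : ∀ v ∈ pmSet x Z, act S⁻¹ v ∈ pmSet x Y := by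
      intro v hv
      rw [← hS] at hv
      obtain ⟨w, hw, rfl⟩ := hv
      rwa [act_inv_act]
    have hpm_fwd : ∀ w ∈ pmSet x Y, act S w ∈ pmSet x Z := by
      intro w hw
      rw [← hS]
      exact ⟨w, hw, rfl⟩
    have hpre : B Y = (fun T => S * T) ⁻¹' (B Z) := by
      rw [hBpm, hBpm]
      ext T
      simp only [Set.mem_setOf_eq, Set.mem_preimage]
      constructor
      · intro hT v hv
        have : act (S * T)⁻¹ v = act T⁻¹ (act S⁻¹ v) := by
          rw [mul_inv_rev, act_mul]
        rw [this]
        exact hT _ (hpm_inv v hv)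
      · intro hT w hw
        have h1 := hT (act S w) (hpm_fwd w hw)
        have : act (S * T)⁻¹ (act S w) = act T⁻¹ w := by
          rw [mul_inv_rev, act_mul, act_inv_act]
        rwa [this] at h1
    rw [hpre, measure_preimage_mul]
  -- the objective value
  set i0 : Fin N := ⟨0, hN⟩ with hi0
  have hsum0 : (∑ I ∈ Finset.univ.filter (fun I => IsIndependent x I ∧ i0 ∈ I), a I) =
      (μ (B {i0})).toReal := by
    rw [← sumBY]
    apply Finset.sum_congr
    · apply Finset.filter_congr
      intro I _
      simp [Finset.singleton_subset_iff]
    · intros; rfl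
  -- identify density
  have hu : ‖x i0‖ = 1 := hx_sphere i0
  set s : Set (sphere (0 : EuclideanSpace ℝ (Fin n)) 1) :=
    ((↑) : sphere (0 : EuclideanSpace ℝ (Fin n)) 1 → EuclideanSpace ℝ (Fin n)) ⁻¹' A with hs
  have hsmeas : MeasurableSet s := measurable_subtype_coe hmeas
  have hkey := haar_act_eq hn1 (x i0) hu s hsmeas
  have hset_eq : {T : OrthGroup n | Qmap (T, (⟨x i0, mem_sphere_zero_iff_norm.mpr hu⟩ :
      sphere (0 : EuclideanSpace ℝ (Fin n)) 1)) ∈ s} =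
      {T : OrthGroup n | act T⁻¹ (x i0) ∈ A} := rfl
  rw [hset_eq] at hkey
  have hdens : density n A = (μ {T : OrthGroup n | act T⁻¹ (x i0) ∈ A}).toReal := by
    rw [density, hkey, ENNReal.toReal_div]
  -- compare and conclude
  have hsubset : {T : OrthGroup n | act T⁻¹ (x i0) ∈ A} ⊆ B {i0} := by
    intro T hT
    intro i hi
    rw [Finset.mem_singleton] at hi
    subst hi
    exact hAsubA' hT
  have hle1 : density n A ≤ (μ (B {i0})).toReal := by
    rw [hdens]
    exact ENNReal.toReal_mono (measure_ne_top μ _) (measure_mono hsubset)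
  have hglemem : (μ (B {i0})).toReal ∈ {g : ℝ | ∃ a : Finset (Fin N) → ℝ,
      (∀ I, 0 ≤ a I) ∧
      (∀ I, ¬ IsIndependent x I → a I = 0) ∧
      (∑ I ∈ Finset.univ.filter (fun I => IsIndependent x I), a I) = 1 ∧
      (∀ Y Z : Finset (Fin N), GeomCongruent x Y Z →
        (∑ I ∈ Finset.univ.filter (fun I => IsIndependent x I ∧ Y ⊆ I), a I) =
        (∑ I ∈ Finset.univ.filter (fun I => IsIndependent x I ∧ Z ⊆ I), a I)) ∧
      (μ (B {i0})).toReal = ∑ I ∈ Finset.univ.filter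
        (fun I => IsIndependent x I ∧ (⟨0, hN⟩ : Fin N) ∈ I), a I} :=
    ⟨a, h0, hzero, htotal, hcong, hsum0.symm⟩
  have hbdd : BddAbove {g : ℝ | ∃ a : Finset (Fin N) → ℝ,
      (∀ I, 0 ≤ a I) ∧
      (∀ I, ¬ IsIndependent x I → a I = 0) ∧
      (∑ I ∈ Finset.univ.filter (fun I => IsIndependent x I), a I) = 1 ∧
      (∀ Y Z : Finset (Fin N), GeomCongruent x Y Z →
        (∑ I ∈ Finset.univ.filter (fun I => IsIndependent x I ∧ Y ⊆ I), a I) =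
        (∑ I ∈ Finset.univ.filter (fun I => IsIndependent x I ∧ Z ⊆ I), a I)) ∧
      g = ∑ I ∈ Finset.univ.filter
        (fun I => IsIndependent x I ∧ (⟨0, hN⟩ : Fin N) ∈ I), a I} := by
    refine ⟨1, ?_⟩
    rintro g ⟨b, hb0, hbz, hbt, hbc, rfl⟩
    calc (∑ I ∈ Finset.univ.filter
          (fun I => IsIndependent x I ∧ (⟨0, hN⟩ : Fin N) ∈ I), b I)
        ≤ ∑ I ∈ Finset.univ.filter (fun I => IsIndependent x I), b I := by
          refine Finset.sum_le_sum_of_subset_of_nonneg ?_ (fun I _ _ => hb0 I)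
          intro I hI
          simp only [Finset.mem_filter, Finset.mem_univ, true_and] at hI ⊢
          exact hI.1
      _ = 1 := hbt
  exact le_trans hle1 (le_csSup hbdd hglemem)

end Main
end DLG

/-- Every measurable orthogonality-avoiding `A ⊆ S^{n-1}` has density at most `Γ(G_X)`;
in particular `α_n ≤ Γ(G_X)`. -/
theorem density_le_Gamma (n : ℕ) (hn : 2 ≤ n)
    (N : ℕ) (hN : 0 < N) (x : Fin N → EuclideanSpace ℝ (Fin n))
    (hx_sphere : ∀ i, x i ∈ unitSphere n)
    (hx_distinct : ∀ i j : Fin N, i ≠ j → x i ≠ x j ∧ x i ≠ -x j) :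
    (∀ A : Set (EuclideanSpace ℝ (Fin n)), A ⊆ unitSphere n → MeasurableSet A →
      AvoidsOrthogonality A → density n A ≤ Gamma n N hN x) ∧
    sSup {d : ℝ | ∃ A : Set (EuclideanSpace ℝ (Fin n)), A ⊆ unitSphere n ∧ MeasurableSet A ∧
      AvoidsOrthogonality A ∧ d = density n A} ≤ Gamma n N hN x := by
  have part1 : ∀ A : Set (EuclideanSpace ℝ (Fin n)), A ⊆ unitSphere n → MeasurableSet A →
      AvoidsOrthogonality A → density n A ≤ Gamma n N hN x := fun A h1 h2 h3 =>
    DLG.density_le_aux n hn N hN x hx_sphere A h1 h2 h3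
  refine ⟨part1, ?_⟩
  have hGamma0 : (0 : ℝ) ≤ Gamma n N hN x := by
    have h := part1 ∅ (Set.empty_subset _) MeasurableSet.empty (fun a ha => absurd ha (by simp))
    have : density n ∅ = 0 := by
      simp [density]
    rwa [this] at h
  apply Real.sSup_le _ hGamma0
  rintro d ⟨A, h1, h2, h3, rfl⟩
  exact part1 A h1 h2 h3
end
end

section
/- Let n ≥ 2 and let X₂ ⊆ X₁ be finite symmetric subsets of S^{n−1}. Then Γ(G_{X₁}) ≤ Γ(G_{X₂}), i.e., the optimal value Γ is monotonically decreasing with respect to inclusion of the underlying point sets. -/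
open MeasureTheory Metric Finset
open scoped RealInnerProductSpace ENNReal Classical

noncomputable section

lemma sum_filter_ext {α : Type*} [Fintype α] {p q : α → Prop} {hp : DecidablePred p}
    {hq : DecidablePred q} (f : α → ℝ) (h : ∀ a, p a ↔ q a) :
    (∑ a ∈ @Finset.filter _ p hp Finset.univ, f a)
      = ∑ a ∈ @Finset.filter _ q hq Finset.univ, f a := by
  refine Finset.sum_congr ?_ (fun _ _ => rfl)
  ext a
  simp only [Finset.mem_filter, Finset.mem_univ, true_and]
  exact h a

lemma isometry_toMatrix_mem {n : ℕ} (f : EuclideanSpace ℝ (Fin n) ≃ₗᵢ[ℝ] EuclideanSpace ℝ (Fin n)) :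
    Matrix.toEuclideanLin.symm (f.toLinearEquiv : EuclideanSpace ℝ (Fin n) →ₗ[ℝ] EuclideanSpace ℝ (Fin n))
      ∈ Matrix.orthogonalGroup (Fin n) ℝ := by
  set M := Matrix.toEuclideanLin.symm (f.toLinearEquiv : EuclideanSpace ℝ (Fin n) →ₗ[ℝ] EuclideanSpace ℝ (Fin n)) with hMdef
  have hM : ∀ x, Matrix.toEuclideanLin M x = f x := by
    intro x
    rw [hMdef, LinearEquiv.apply_symm_apply]
    rfl
  have hcol : ∀ (i k : Fin n), f (EuclideanSpace.single i 1) k = M k i := by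
    intro i k
    rw [← hM, Matrix.toEuclideanLin_apply]
    rw [show ((EuclideanSpace.single i (1:ℝ))) = (WithLp.equiv 2 _).symm (Pi.single i 1) from rfl]
    simp [Matrix.mulVec_single]
  rw [Matrix.mem_orthogonalGroup_iff']
  ext i j
  have h := f.inner_map_map (EuclideanSpace.single i (1:ℝ)) (EuclideanSpace.single j 1)
  rw [EuclideanSpace.inner_single_left] at h
  simp only [PiLp.inner_apply, RCLike.inner_apply, starRingEnd_apply] at h
  simp only [hcol, star_trivial, one_mul] at h
  simp only [Matrix.mul_apply, Matrix.star_apply, Matrix.transpose_apply, Matrix.one_apply, star_trivial]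
  rw [show (∑ k, M k i * M k j) = ∑ k, M k j * M k i from Finset.sum_congr rfl (fun _ _ => mul_comm _ _), h]
  simp [EuclideanSpace.single_apply, eq_comm]

lemma exists_act_eq {n : ℕ} (u v : EuclideanSpace ℝ (Fin n)) (h : ‖u‖ = ‖v‖) :
    ∃ S : OrthGroup n, act S u = v := by
  set f := (Submodule.reflection (ℝ ∙ (u - v))ᗮ : EuclideanSpace ℝ (Fin n) ≃ₗᵢ[ℝ] EuclideanSpace ℝ (Fin n))
  refine ⟨⟨_, isometry_toMatrix_mem f⟩, ?_⟩
  show Matrix.toEuclideanLin _ u = v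
  rw [LinearEquiv.apply_symm_apply]
  show f u = v
  exact Submodule.reflection_sub h

lemma act_neg {n : ℕ} (S : OrthGroup n) (u : EuclideanSpace ℝ (Fin n)) :
    act S (-u) = -(act S u) :=
  map_neg (Matrix.toEuclideanLin (S : Matrix (Fin n) (Fin n) ℝ)) u

lemma pmSet_singleton {n N : ℕ} (x : Fin N → EuclideanSpace ℝ (Fin n)) (i : Fin N) :
    pmSet x {i} = {x i, -x i} := by
  ext v
  simp [pmSet]

lemma congruent_singleton {n N : ℕ} (x : Fin N → EuclideanSpace ℝ (Fin n))
    (hx : ∀ i, x i ∈ unitSphere n) (i j : Fin N) : GeomCongruent x {i} {j} := by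
  obtain ⟨S, hS⟩ := exists_act_eq (x i) (x j) (by rw [hx i, hx j])
  refine ⟨S, ?_⟩
  rw [pmSet_singleton, pmSet_singleton, Set.image_pair, hS, act_neg, hS]

lemma pmSet_empty_iff {n N : ℕ} (x : Fin N → EuclideanSpace ℝ (Fin n)) (Y : Finset (Fin N)) :
    pmSet x Y = ∅ ↔ Y = ∅ := by
  constructor
  · intro h
    by_contra hY
    obtain ⟨i, hi⟩ := Finset.nonempty_iff_ne_empty.mpr hY
    have : x i ∈ pmSet x Y := ⟨i, hi, Or.inl rfl⟩
    rw [h] at this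
    exact this
  · rintro rfl
    ext v
    simp [pmSet]

lemma congruent_empty_iff {n N : ℕ} (x : Fin N → EuclideanSpace ℝ (Fin n)) {Y Z : Finset (Fin N)}
    (h : GeomCongruent x Y Z) : Y = ∅ ↔ Z = ∅ := by
  obtain ⟨S, hS⟩ := h
  constructor
  · rintro rfl
    refine (pmSet_empty_iff x Z).mp ?_
    rw [← hS, (pmSet_empty_iff x ∅).mpr rfl, Set.image_empty]
  · rintro rfl
    have h2 : act S '' pmSet x Y = ∅ := by rw [hS, (pmSet_empty_iff x ∅).mpr rfl]
    rw [Set.image_eq_empty] at h2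
    exact (pmSet_empty_iff x Y).mp h2

/-- Monotonicity of `Γ`: if the finite symmetric set `X₂` is contained in `X₁`
(via an injection `e` identifying each antipodal pair of `X₂` with one of `X₁`),
then `Γ(G_{X₁}) ≤ Γ(G_{X₂})`. -/
theorem Gamma_antitone (n : ℕ) (hn : 2 ≤ n)
    (N₁ N₂ : ℕ) (hN₁ : 0 < N₁) (hN₂ : 0 < N₂)
    (x₁ : Fin N₁ → EuclideanSpace ℝ (Fin n)) (x₂ : Fin N₂ → EuclideanSpace ℝ (Fin n))
    (hx₁_sphere : ∀ i, x₁ i ∈ unitSphere n)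
    (hx₁_distinct : ∀ i j : Fin N₁, i ≠ j → x₁ i ≠ x₁ j ∧ x₁ i ≠ -x₁ j)
    (hx₂_sphere : ∀ i, x₂ i ∈ unitSphere n)
    (hx₂_distinct : ∀ i j : Fin N₂, i ≠ j → x₂ i ≠ x₂ j ∧ x₂ i ≠ -x₂ j)
    (e : Fin N₂ → Fin N₁) (he : Function.Injective e)
    (hsub : ∀ i : Fin N₂, x₁ (e i) = x₂ i ∨ x₁ (e i) = -x₂ i) :
    Gamma n N₁ hN₁ x₁ ≤ Gamma n N₂ hN₂ x₂ := by
  classical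
  unfold Gamma
  -- S₂ is bounded above by 1
  have hbdd : ∀ g ∈ {g : ℝ | ∃ a : Finset (Fin N₂) → ℝ,
      (∀ I, 0 ≤ a I) ∧
      (∀ I, ¬ IsIndependent x₂ I → a I = 0) ∧
      (∑ I ∈ Finset.univ.filter (fun I => IsIndependent x₂ I), a I) = 1 ∧
      (∀ Y Z : Finset (Fin N₂), GeomCongruent x₂ Y Z →
        (∑ I ∈ Finset.univ.filter (fun I => IsIndependent x₂ I ∧ Y ⊆ I), a I) =
        (∑ I ∈ Finset.univ.filter (fun I => IsIndependent x₂ I ∧ Z ⊆ I), a I)) ∧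
      g = ∑ I ∈ Finset.univ.filter (fun I => IsIndependent x₂ I ∧ (⟨0, hN₂⟩ : Fin N₂) ∈ I), a I},
      g ≤ 1 := by
    rintro g ⟨a, h0, -, hsum, -, rfl⟩
    calc ∑ I ∈ Finset.univ.filter (fun I => IsIndependent x₂ I ∧ (⟨0, hN₂⟩ : Fin N₂) ∈ I), a I
        ≤ ∑ I ∈ Finset.univ.filter (fun I => IsIndependent x₂ I), a I := by
          apply Finset.sum_le_sum_of_subset_of_nonneg
          · intro I hI
            exact Finset.mem_filter.mpr ⟨Finset.mem_univ _, (Finset.mem_filter.mp hI).2.1⟩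
          · intro I _ _
            exact h0 I
      _ = 1 := hsum
  have hbdd' : BddAbove {g : ℝ | ∃ a : Finset (Fin N₂) → ℝ,
      (∀ I, 0 ≤ a I) ∧
      (∀ I, ¬ IsIndependent x₂ I → a I = 0) ∧
      (∑ I ∈ Finset.univ.filter (fun I => IsIndependent x₂ I), a I) = 1 ∧
      (∀ Y Z : Finset (Fin N₂), GeomCongruent x₂ Y Z →
        (∑ I ∈ Finset.univ.filter (fun I => IsIndependent x₂ I ∧ Y ⊆ I), a I) =
        (∑ I ∈ Finset.univ.filter (fun I => IsIndependent x₂ I ∧ Z ⊆ I), a I)) ∧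
      g = ∑ I ∈ Finset.univ.filter (fun I => IsIndependent x₂ I ∧ (⟨0, hN₂⟩ : Fin N₂) ∈ I), a I} :=
    ⟨1, hbdd⟩
  -- 0 is in S₂ (the indicator of the empty set is feasible)
  have hindep_empty : ∀ (M : ℕ) (x : Fin M → EuclideanSpace ℝ (Fin n)),
      IsIndependent x (∅ : Finset (Fin M)) :=
    fun M x i hi => absurd hi (Finset.notMem_empty i)
  have hzero : (0 : ℝ) ∈ {g : ℝ | ∃ a : Finset (Fin N₂) → ℝ,
      (∀ I, 0 ≤ a I) ∧
      (∀ I, ¬ IsIndependent x₂ I → a I = 0) ∧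
      (∑ I ∈ Finset.univ.filter (fun I => IsIndependent x₂ I), a I) = 1 ∧
      (∀ Y Z : Finset (Fin N₂), GeomCongruent x₂ Y Z →
        (∑ I ∈ Finset.univ.filter (fun I => IsIndependent x₂ I ∧ Y ⊆ I), a I) =
        (∑ I ∈ Finset.univ.filter (fun I => IsIndependent x₂ I ∧ Z ⊆ I), a I)) ∧
      (0:ℝ) = ∑ I ∈ Finset.univ.filter (fun I => IsIndependent x₂ I ∧ (⟨0, hN₂⟩ : Fin N₂) ∈ I), a I} := by
    refine ⟨fun I => if I = ∅ then 1 else 0, ?_, ?_, ?_, ?_, ?_⟩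
    · intro I
      dsimp only
      split <;> norm_num
    · intro I hI
      dsimp only
      rw [if_neg]
      rintro rfl
      exact hI (hindep_empty N₂ x₂)
    · rw [Finset.sum_ite_eq' _ ∅ (fun _ => (1:ℝ)), if_pos]
      exact Finset.mem_filter.mpr ⟨Finset.mem_univ _, hindep_empty N₂ x₂⟩
    · intro Y Z hYZ
      rw [Finset.sum_ite_eq' _ ∅ (fun _ => (1:ℝ)), Finset.sum_ite_eq' _ ∅ (fun _ => (1:ℝ))]
      have hiff := congruent_empty_iff x₂ hYZ
      simp only [Finset.mem_filter, Finset.mem_univ, true_and, hindep_empty N₂ x₂,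
        Finset.subset_empty]
      by_cases hY : Y = ∅
      · rw [if_pos hY, if_pos (hiff.mp hY)]
      · rw [if_neg hY, if_neg (fun h => hY (hiff.mpr h))]
    · rw [Finset.sum_ite_eq' _ ∅ (fun _ => (1:ℝ)), if_neg]
      simp
  have hGamma₂_nonneg : (0:ℝ) ≤ sSup {g : ℝ | ∃ a : Finset (Fin N₂) → ℝ,
      (∀ I, 0 ≤ a I) ∧
      (∀ I, ¬ IsIndependent x₂ I → a I = 0) ∧
      (∑ I ∈ Finset.univ.filter (fun I => IsIndependent x₂ I), a I) = 1 ∧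
      (∀ Y Z : Finset (Fin N₂), GeomCongruent x₂ Y Z →
        (∑ I ∈ Finset.univ.filter (fun I => IsIndependent x₂ I ∧ Y ⊆ I), a I) =
        (∑ I ∈ Finset.univ.filter (fun I => IsIndependent x₂ I ∧ Z ⊆ I), a I)) ∧
      g = ∑ I ∈ Finset.univ.filter (fun I => IsIndependent x₂ I ∧ (⟨0, hN₂⟩ : Fin N₂) ∈ I), a I} :=
    le_csSup hbdd' hzero
  apply Real.sSup_le _ hGamma₂_nonneg
  rintro g ⟨a, ha0, hani, hasum, hacong, rfl⟩
  -- transfer facts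
  have hinner : ∀ i j : Fin N₂, (⟪x₁ (e i), x₁ (e j)⟫ = 0 ↔ ⟪x₂ i, x₂ j⟫ = 0) := by
    intro i j
    rcases hsub i with h1 | h1 <;> rcases hsub j with h2 | h2 <;>
      rw [h1, h2] <;> simp [inner_neg_left, inner_neg_right, neg_eq_zero]
  have hpm_img : ∀ Y : Finset (Fin N₂), pmSet x₂ Y = pmSet x₁ (Y.image e) := by
    intro Y
    ext v
    simp only [pmSet, Set.mem_setOf_eq]
    constructor
    · rintro ⟨i, hi, hv⟩
      refine ⟨e i, Finset.mem_image_of_mem e hi, ?_⟩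
      rcases hsub i with h | h <;> rcases hv with rfl | rfl
      · left; rw [h]
      · right; rw [h]
      · right; rw [h, neg_neg]
      · left; rw [h]
    · rintro ⟨j, hj, hv⟩
      rw [Finset.mem_image] at hj
      obtain ⟨i, hi, rfl⟩ := hj
      refine ⟨i, hi, ?_⟩
      rcases hsub i with h | h <;> rcases hv with rfl | rfl
      · left; exact h
      · right; rw [h]
      · right; exact h
      · left; rw [h, neg_neg]
  have hcong_img : ∀ Y Z : Finset (Fin N₂), GeomCongruent x₂ Y Z →
      GeomCongruent x₁ (Y.image e) (Z.image e) := by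
    rintro Y Z ⟨S, hS⟩
    exact ⟨S, by rw [← hpm_img Y, ← hpm_img Z, hS]⟩
  -- the pushforward distribution
  set pre : Finset (Fin N₁) → Finset (Fin N₂) :=
    fun I => Finset.univ.filter (fun j => e j ∈ I) with hpredef
  set a₂ : Finset (Fin N₂) → ℝ :=
    fun J => ∑ I ∈ (Finset.univ.filter (fun I => IsIndependent x₁ I)).filter
      (fun I => pre I = J), a I with ha₂def
  have hpre_indep : ∀ I, IsIndependent x₁ I → IsIndependent x₂ (pre I) := by
    intro I hI i hi j hj hij
    rw [hpredef] at hi hj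
    exact fun hz => hI _ (Finset.mem_filter.mp hi).2 _ (Finset.mem_filter.mp hj).2
      (fun hh => hij (he hh)) ((hinner i j).mpr hz)
  have hsubpre : ∀ (Y : Finset (Fin N₂)) (I : Finset (Fin N₁)),
      Y ⊆ pre I ↔ Y.image e ⊆ I := by
    intro Y I
    constructor
    · intro h j hj
      rw [Finset.mem_image] at hj
      obtain ⟨i, hi, rfl⟩ := hj
      have := h hi
      rw [hpredef] at this
      exact (Finset.mem_filter.mp this).2
    · intro h i hi
      rw [hpredef]
      exact Finset.mem_filter.mpr ⟨Finset.mem_univ _, h (Finset.mem_image_of_mem e hi)⟩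
  have hkey : ∀ q : Finset (Fin N₂) → Prop,
      (∑ J ∈ Finset.univ.filter (fun J => IsIndependent x₂ J ∧ q J), a₂ J)
      = ∑ I ∈ Finset.univ.filter (fun I => IsIndependent x₁ I ∧ q (pre I)), a I := by
    intro q
    calc (∑ J ∈ Finset.univ.filter (fun J => IsIndependent x₂ J ∧ q J), a₂ J)
        = ∑ J ∈ Finset.univ.filter (fun J => IsIndependent x₂ J ∧ q J),
            ∑ I ∈ (Finset.univ.filter (fun I => IsIndependent x₁ I)).filter
              (fun I => pre I = J), a I := by rw [ha₂def]
      _ = ∑ I ∈ (Finset.univ.filter (fun I => IsIndependent x₁ I)).filter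
            (fun I => pre I ∈ Finset.univ.filter (fun J => IsIndependent x₂ J ∧ q J)), a I :=
          Finset.sum_fiberwise_eq_sum_filter _ _ pre a
      _ = ∑ I ∈ Finset.univ.filter (fun I => IsIndependent x₁ I ∧ q (pre I)), a I := by
          rw [Finset.filter_filter]
          refine Finset.sum_congr (Finset.filter_congr ?_) (fun _ _ => rfl)
          intro I _
          simp only [Finset.mem_filter, Finset.mem_univ, true_and]
          exact ⟨fun ⟨h1, _, h3⟩ => ⟨h1, h3⟩, fun ⟨h1, h3⟩ => ⟨h1, hpre_indep I h1, h3⟩⟩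
  -- feasibility of a₂ and the value identity
  refine le_csSup hbdd' ⟨a₂, ?_, ?_, ?_, ?_, ?_⟩
  · intro J
    rw [ha₂def]
    exact Finset.sum_nonneg (fun I _ => ha0 I)
  · intro J hJ
    rw [ha₂def]
    apply Finset.sum_eq_zero
    intro I hI
    rw [Finset.mem_filter, Finset.mem_filter] at hI
    exact absurd (hI.2 ▸ hpre_indep I hI.1.2) hJ
  · have h := hkey (fun _ => True)
    simp only [and_true] at h
    rw [h]
    exact hasum
  · intro Y Z hYZ
    have hY' := hkey (fun J => Y ⊆ J)
    have hZ' := hkey (fun J => Z ⊆ J)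
    beta_reduce at hY' hZ'
    exact (sum_filter_ext a₂ (fun J => Iff.rfl)).trans <|
      hY'.trans <|
      (sum_filter_ext a (fun I => and_congr Iff.rfl (hsubpre Y I))).trans <|
      (hacong _ _ (hcong_img Y Z hYZ)).trans <|
      (sum_filter_ext a (fun I => and_congr Iff.rfl (hsubpre Z I))).symm.trans <|
      hZ'.symm.trans <|
      sum_filter_ext a₂ (fun J => Iff.rfl)
  · have h := hkey (fun J => (⟨0, hN₂⟩ : Fin N₂) ∈ J)
    beta_reduce at h
    have hmem : ∀ I : Finset (Fin N₁), ((⟨0, hN₂⟩ : Fin N₂) ∈ pre I ↔ e ⟨0, hN₂⟩ ∈ I) := by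
      intro I
      rw [hpredef]
      simp [Finset.mem_filter]
    exact (sum_filter_ext a (fun I => and_congr Iff.rfl Finset.singleton_subset_iff.symm)).trans <|
      (hacong _ _ (congruent_singleton x₁ hx₁_sphere (⟨0, hN₁⟩ : Fin N₁) (e ⟨0, hN₂⟩))).trans <|
      (sum_filter_ext a (fun I =>
        and_congr Iff.rfl (Finset.singleton_subset_iff.trans (hmem I).symm))).trans <|
      h.symm.trans <|
      sum_filter_ext a₂ (fun J => Iff.rfl)
end
end
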